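/- arXiv:1909.01676 — 2 statements merged into one kernel-verified Lean document; each statement's English description precedes it below -/
import Mathlib

section
/- Let a : ℕ → {0,1} be the Champernowne-type sequence obtained by concatenating all finite binary words ordered first by length and then lexicographically, and define φ : ℤ → {0,1} by φ(n) = 0 for n < 0 and φ(n) = a_n for n ≥ 0. Let X be the simple graph whose vertex set is ℤ ⊔ {n ∈ ℤ : φ(n) = 1}, whose edges are: {m,n} for integers m, n in the ℤ part with |m − n| = 1, together with, for each n ∈ ℤ with φ(n) = 1, an edge joining the pendant vertex indexed by n to the integer vertex n. Then X is aperiodic: every graph automorphism of X is the identity. -/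
/-- The j-th binary word (j ≥ 2): the binary representation of j with its leading
digit 1 deleted; `false` stands for the digit 0 and `true` for the digit 1. -/
def champWord (j : ℕ) : List Bool := (Nat.bits j).reverse.tail

/-- The concatenation w₂ w₃ ⋯ w_{m+1} of the first m binary words. -/
def champPrefix (m : ℕ) : List Bool := (List.range m).flatMap (fun i => champWord (i + 2))

/-- The Champernowne-type sequence a : ℕ → {0,1}: the n-th letter of the infinite
concatenation w₂ w₃ w₄ ⋯. -/
def champ (n : ℕ) : Bool := (champPrefix (n + 1)).getD n false

/-- The coloring φ : ℤ → {0,1}: φ(n) = 0 for n < 0 and φ(n) = a_n for n ≥ 0. -/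
def champColoring (n : ℤ) : Bool := if n < 0 then false else champ n.toNat

/-- The graph X: vertex set ℤ ⊔ {n ∈ ℤ : φ(n) = 1}; edges {m,n} for |m - n| = 1 in the
ℤ part, together with an edge joining the pendant vertex indexed by n to the integer
vertex n, for each n with φ(n) = 1. -/
def champGraph : SimpleGraph (ℤ ⊕ {n : ℤ // champColoring n = true}) :=
  SimpleGraph.fromRel (fun a b =>
    match a, b with
    | Sum.inl m, Sum.inl n => n = m + 1
    | Sum.inr p, Sum.inl n => (p : ℤ) = n
    | Sum.inl _, Sum.inr _ => False
    | Sum.inr _, Sum.inr _ => False)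

/-!
Pendant vertices have a single neighbour while integer vertices have two, so an automorphism of
`X` maps `ℤ` to itself and restricts to an automorphism `g` of the path on `ℤ`: `g n = c + n` or
`g n = c - n`. It also preserves `φ`, since `φ n = 1` exactly when `n` carries a pendant vertex.
As `φ` vanishes on the negatives but takes the value `1` at arbitrarily large positions, `g` cannot
be a reflection, and a translation by a period `c ≠ 0` of `φ` would move a `1` to a negative
position. So `g` is the identity, and then so is the automorphism on the pendant vertices.
-/

open Function Sum

lemma eq_add_mul_of_forall_sub_eq {g : ℤ → ℤ} {e : ℤ} (h : ∀ n, g (n + 1) - g n = e) (n : ℤ) :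
    g n = g 0 + e * n := by
  have hper : Periodic (fun n => g n - e * n) 1 := fun n => by
    simp only
    linarith [h n]
  have := hper.int_mul_eq n
  simp only [Int.cast_id, mul_one, mul_zero, sub_zero] at this
  linarith

lemma eq_add_or_eq_sub_of_injective {g : ℤ → ℤ} (hg : Injective g)
    (hadj : ∀ n, g (n + 1) = g n + 1 ∨ g n = g (n + 1) + 1) :
    (∀ n, g n = g 0 + n) ∨ (∀ n, g n = g 0 - n) := by
  -- Injectivity forbids `g (n + 2) = g n`, so consecutive steps agree.
  have hper : Periodic (fun n => g (n + 1) - g n) 1 := fun n => by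
    have hne : g (n + 1 + 1) ≠ g n := fun h => by have := hg h; omega
    have := hadj n
    have := hadj (n + 1)
    simp only
    omega
  have hstep (n : ℤ) : g (n + 1) - g n = g 1 - g 0 := by
    simpa using hper.int_mul_eq n
  rcases zero_add (1 : ℤ) ▸ hadj 0 with h | h
  · left
    intro n
    rw [eq_add_mul_of_forall_sub_eq hstep n, h]
    ring
  · right
    intro n
    rw [eq_add_mul_of_forall_sub_eq hstep n, h]
    ring

section Coloring

variable {φ : ℤ → Bool}

lemma not_forall_apply_sub_eq (hneg : ∀ n < 0, φ n = false)
    (hpos : ∀ N, ∃ n, N ≤ n ∧ φ n = true) (c : ℤ) : ¬ ∀ n, φ (c - n) = φ n := by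
  intro h
  obtain ⟨n, hn, hφn⟩ := hpos (c + 1)
  have := h n
  rw [hneg _ (by omega), hφn] at this
  exact Bool.false_ne_true this

lemma eq_zero_of_periodic (hneg : ∀ n < 0, φ n = false)
    (hpos : ∀ N, ∃ n, N ≤ n ∧ φ n = true) {c : ℤ} (h : Periodic φ c) : c = 0 := by
  by_contra hc
  obtain ⟨n, hn, hφn⟩ := hpos 0
  have := h.sub_int_mul_eq (x := n) ((n + 1) * c)
  rw [hneg _ ?_, hφn] at this
  · exact Bool.false_ne_true this
  · push_cast
    nlinarith [mul_self_pos.mpr hc]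

end Coloring

lemma SimpleGraph.Iso.neighborSet_subsingleton_iff {V W : Type*} {G : SimpleGraph V}
    {H : SimpleGraph W} (f : G ≃g H) (v : V) :
    (H.neighborSet (f v)).Subsingleton ↔ (G.neighborSet v).Subsingleton := by
  rw [← f.toEmbedding.preimage_neighborSet v]
  exact ⟨fun h => h.preimage f.injective, Set.subsingleton_of_preimage f.surjective _⟩

def pendantPath (φ : ℤ → Bool) : SimpleGraph (ℤ ⊕ {n : ℤ // φ n = true}) :=
  SimpleGraph.fromRel (fun a b =>
    match a, b with
    | inl m, inl n => n = m + 1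
    | inr p, inl n => (p : ℤ) = n
    | inl _, inr _ => False
    | inr _, inr _ => False)

lemma champGraph_eq_pendantPath : champGraph = pendantPath champColoring := by
  ext a b
  rcases a with a | a <;> rcases b with b | b <;> rfl

namespace pendantPath

variable {φ : ℤ → Bool}

lemma adj_inl_inl {m n : ℤ} : (pendantPath φ).Adj (inl m) (inl n) ↔ n = m + 1 ∨ m = n + 1 := by
  simp only [pendantPath, SimpleGraph.fromRel_adj, ne_eq, inl.injEq]
  omega

lemma adj_inl_inr {n : ℤ} {p : {n : ℤ // φ n = true}} :
    (pendantPath φ).Adj (inl n) (inr p) ↔ (p : ℤ) = n := by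
  simp [pendantPath]

lemma not_adj_inr_inr (p q : {n : ℤ // φ n = true}) : ¬ (pendantPath φ).Adj (inr p) (inr q) := by
  simp [pendantPath]

lemma neighborSet_inr (p : {n : ℤ // φ n = true}) :
    (pendantPath φ).neighborSet (inr p) = {inl (p : ℤ)} := by
  ext (w | w)
  · rw [SimpleGraph.mem_neighborSet, SimpleGraph.adj_comm, adj_inl_inr, Set.mem_singleton_iff,
      inl.injEq, eq_comm]
  · simp [not_adj_inr_inr]

lemma neighborSet_subsingleton_iff {v : ℤ ⊕ {n : ℤ // φ n = true}} :
    ((pendantPath φ).neighborSet v).Subsingleton ↔ v.isRight := by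
  rcases v with n | p
  · simp only [isRight_inl, Bool.false_eq_true, iff_false]
    intro h
    have := @h (inl (n + 1)) (by simp [adj_inl_inl]) (inl (n - 1)) (by simp [adj_inl_inl])
    simp only [inl.injEq] at this
    omega
  · simp [neighborSet_inr]

lemma isRight_apply (f : pendantPath φ ≃g pendantPath φ) (v : ℤ ⊕ {n : ℤ // φ n = true}) :
    (f v).isRight = v.isRight := by
  rw [Bool.eq_iff_iff, ← neighborSet_subsingleton_iff, ← neighborSet_subsingleton_iff,
    f.neighborSet_subsingleton_iff]

lemma exists_apply_inl_eq_inl (f : pendantPath φ ≃g pendantPath φ) (n : ℤ) :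
    ∃ m, f (inl n) = inl m := by
  rw [← isLeft_iff, ← not_isRight, isRight_apply]
  simp

lemma exists_apply_inr_eq_inr (f : pendantPath φ ≃g pendantPath φ) (p : {n : ℤ // φ n = true}) :
    ∃ q, f (inr p) = inr q := by
  rw [← isRight_iff, isRight_apply]
  rfl

lemma apply_eq_true_iff {n : ℤ} :
    φ n = true ↔ ∃ w, w.isRight ∧ (pendantPath φ).Adj (inl n) w := by
  constructor
  · exact fun h => ⟨inr ⟨n, h⟩, rfl, adj_inl_inr.mpr rfl⟩
  · rintro ⟨w, hw, hadj⟩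
    obtain ⟨p, rfl⟩ := isRight_iff.mp hw
    exact adj_inl_inr.mp hadj ▸ p.2

lemma apply_eq_of_apply_inl_eq_inl {f : pendantPath φ ≃g pendantPath φ} {m n : ℤ}
    (h : f (inl n) = inl m) : φ m = φ n := by
  rw [Bool.eq_iff_iff, apply_eq_true_iff, apply_eq_true_iff, ← h, f.surjective.exists]
  simp only [isRight_apply, f.map_adj_iff]

lemma apply_eq_self_of_forall_inl (f : pendantPath φ ≃g pendantPath φ)
    (h : ∀ n, f (inl n) = inl n) (v : ℤ ⊕ {n : ℤ // φ n = true}) : f v = v := by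
  rcases v with n | p
  · exact h n
  · obtain ⟨q, hq⟩ := exists_apply_inr_eq_inr f p
    have hadj : (pendantPath φ).Adj (f (inl (p : ℤ))) (f (inr p)) :=
      f.map_adj_iff.mpr (adj_inl_inr.mpr rfl)
    rw [h, hq, adj_inl_inr] at hadj
    rw [hq, Subtype.ext hadj]

theorem apply_eq_self (hneg : ∀ n < 0, φ n = false) (hpos : ∀ N, ∃ n, N ≤ n ∧ φ n = true)
    (f : pendantPath φ ≃g pendantPath φ) (v : ℤ ⊕ {n : ℤ // φ n = true}) : f v = v := by
  choose g hg using exists_apply_inl_eq_inl f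
  have hinj : Injective g := fun a b h => inl_injective (f.injective (by rw [hg, hg, h]))
  have hadj (n : ℤ) : g (n + 1) = g n + 1 ∨ g n = g (n + 1) + 1 := by
    rw [← adj_inl_inl, ← hg, ← hg, f.map_adj_iff, adj_inl_inl]
    exact Or.inl rfl
  have hφ (n : ℤ) : φ (g n) = φ n := apply_eq_of_apply_inl_eq_inl (hg n)
  have hid (n : ℤ) : g n = n := by
    rcases eq_add_or_eq_sub_of_injective hinj hadj with htrans | hrefl
    · have hc : g 0 = 0 := eq_zero_of_periodic hneg hpos fun n => by rw [add_comm, ← htrans, hφ]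
      rw [htrans, hc, zero_add]
    · exact absurd (fun n => by rw [← hrefl, hφ]) (not_forall_apply_sub_eq hneg hpos (g 0))
  exact apply_eq_self_of_forall_inl f (fun n => by rw [hg, hid]) v

end pendantPath

lemma champWord_two_mul_add_one {n : ℕ} (hn : n ≠ 0) :
    champWord (2 * n + 1) = champWord n ++ [true] := by
  have hbits : n.bits ≠ [] :=
    List.ne_nil_of_length_pos (by rw [Nat.size_eq_bits_len]; exact Nat.size_pos.mpr (by omega))
  rw [champWord, champWord, Nat.bit1_bits, List.reverse_cons,
    List.tail_append_singleton_of_ne_nil (by simpa using hbits)]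

lemma one_le_length_champWord (m : ℕ) : 1 ≤ (champWord (m + 2)).length := by
  rw [champWord, List.length_tail, List.length_reverse, Nat.size_eq_bits_len]
  have : 1 < (m + 2).size := Nat.lt_size.mpr (by omega)
  omega

lemma champPrefix_succ (m : ℕ) : champPrefix (m + 1) = champPrefix m ++ champWord (m + 2) := by
  simp [champPrefix, List.range_succ]

lemma le_length_champPrefix (m : ℕ) : m ≤ (champPrefix m).length := by
  induction m with
  | zero => simp
  | succ k ih =>
    rw [champPrefix_succ, List.length_append]
    have := one_le_length_champWord k
    omega

lemma champPrefix_prefix {m m' : ℕ} (h : m ≤ m') : champPrefix m <+: champPrefix m' := by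
  obtain ⟨k, rfl⟩ := Nat.exists_eq_add_of_le h
  rw [champPrefix, champPrefix, List.range_add]
  exact (List.prefix_append _ _).flatMap _

lemma champ_eq_getD {n m : ℕ} (h : n < (champPrefix m).length) :
    champ n = (champPrefix m).getD n false := by
  have hn : n < (champPrefix (n + 1)).length := by
    have := le_length_champPrefix (n + 1)
    omega
  rw [champ, List.getD_eq_getElem _ _ h, List.getD_eq_getElem _ _ hn]
  rcases Nat.le_total (n + 1) m with hle | hle
  · exact (champPrefix_prefix hle).getElem hn
  · exact ((champPrefix_prefix hle).getElem h).symm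

/-- Every odd word `w_{2k+1} = w_k 1` ends in `1`, so the letters `1` never stop. -/
lemma exists_ge_champ_eq_true (N : ℕ) : ∃ n, N ≤ n ∧ champ n = true := by
  have hsplit :
      champPrefix (2 * N + 2) = champPrefix (2 * N + 1) ++ champWord (N + 1) ++ [true] := by
    rw [champPrefix_succ, show 2 * N + 1 + 2 = 2 * (N + 1) + 1 by ring,
      champWord_two_mul_add_one (by omega), List.append_assoc]
  set l := champPrefix (2 * N + 1) ++ champWord (N + 1)
  refine ⟨l.length, ?_, ?_⟩
  · have := le_length_champPrefix (2 * N + 1)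
    simp only [l, List.length_append]
    omega
  · rw [champ_eq_getD (m := 2 * N + 2) (by simp [hsplit]), hsplit]
    simp

lemma champColoring_of_neg {n : ℤ} (hn : n < 0) : champColoring n = false := by
  simp [champColoring, hn]

lemma exists_ge_champColoring_eq_true (N : ℤ) : ∃ n, N ≤ n ∧ champColoring n = true := by
  obtain ⟨k, hk, hchamp⟩ := exists_ge_champ_eq_true N.toNat
  exact ⟨k, by omega, by simpa [champColoring] using hchamp⟩

/-- The (uncolored) graph X obtained from the path on ℤ by attaching a
pendant vertex at every integer n with φ(n) = 1 is aperiodic: every graph automorphism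
of X is the identity. -/
theorem stmt_14 (f : champGraph ≃g champGraph) :
    ∀ v : ℤ ⊕ {n : ℤ // champColoring n = true}, f v = v := by
  revert f
  rw [champGraph_eq_pendantPath]
  exact pendantPath.apply_eq_self (fun _ => champColoring_of_neg) exists_ge_champColoring_eq_true
end

section
/- Let Δ ∈ ℕ, let Ξ be a compact metric space, and let (X_k, x_k, φ_k), k ∈ ℕ, be a sequence of pointed, infinite, connected simple graphs in which every vertex has degree at most Δ, equipped with colorings φ_k : X_k → Ξ. Then there exist a strictly increasing function j : ℕ → ℕ, a countable type V, an infinite connected simple graph X on V in which every vertex has degree at most Δ, a vertex x ∈ V, and a coloring φ : X → Ξ, such that for every n ∈ ℕ and every ε > 0 there is N ∈ ℕ with the property that for all k ≥ N there is a graph isomorphism h from the subgraph of X_{j(k)} induced on the disk D(x_{j(k)}, n) to the subgraph of X induced on the disk D(x, n) with h(x_{j(k)}) = x and d(φ_{j(k)}(u), φ(h(u))) < ε for every u ∈ D(x_{j(k)}, n). -/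
/-!
Number the vertices of each `X_k` in breadth-first order from `x_k`. Since degrees are at most
`Δ`, the ball of radius `n` has at most `(Δ + 1) ^ n` vertices, so in every such numbering it
occupies the window `[0, (Δ + 1) ^ n)` of `ℕ`. The pointed colored graphs thus become points of
the compact space `(ℕ → ℕ → Bool) × (ℕ → Ξ)`. A convergent subsequence yields a limit graph on
`ℕ` that agrees with `X_{j(k)}` on any fixed window once `k` is large, so the two have the same
ball of radius `n`, with colors that are close.
-/

open Filter Topology

theorem exists_equiv_nat_monotone {α : Type*} [Infinite α] (f : α → ℕ)
    (hf : ∀ n, {a | f a ≤ n}.Finite) : ∃ e : ℕ ≃ α, Monotone (f ∘ e) := by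
  have : Countable α := by
    have hcover : ⋃ n, {a | f a ≤ n} = Set.univ :=
      Set.eq_univ_of_forall fun a => Set.mem_iUnion.2 ⟨f a, le_refl (f a)⟩
    exact Set.countable_univ_iff.1 (hcover ▸ Set.countable_iUnion fun n => (hf n).countable)
  obtain ⟨ι, hι⟩ := Countable.exists_injective_nat α
  -- Ordered lexicographically by `(f a, ι a)`, `α` has finite lower sets, hence is `≃o ℕ`.
  let key : α → ℕ ×ₗ ℕ := fun a => toLex (f a, ι a)
  let _ : LinearOrder α :=
    LinearOrder.lift' key fun a b h => hι (congrArg Prod.snd (toLex.injective h))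
  have hmono : Monotone f := fun a b h => (Prod.Lex.monotone_fst _ _ h : _)
  have hIic : ∀ b : α, (Set.Iic b).Finite := fun b => (hf (f b)).subset fun a h => hmono h
  let _ : LocallyFiniteOrder α :=
    LocallyFiniteOrder.ofFiniteIcc fun a b => (hIic b).subset Set.Icc_subset_Iic_self
  have : WellFoundedLT α := ⟨InvImage.wf key wellFounded_lt⟩
  let _ : OrderBot α := WellFoundedLT.toOrderBot α
  have : NoMaxOrder α := ⟨fun a => by
    obtain ⟨b, hb⟩ := (hIic a).infinite_compl.nonempty
    exact ⟨b, not_le.mp hb⟩⟩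
  let _ := LinearLocallyFiniteOrder.succOrder α
  let _ := LinearLocallyFiniteOrder.predOrder α
  let o : α ≃o ℕ := orderIsoNatOfLinearSuccPredArch
  exact ⟨o.symm.toEquiv, hmono.comp o.symm.monotone⟩

namespace SimpleGraph

variable {V W : Type*} {G : SimpleGraph V} {G' : SimpleGraph W}

theorem Hom.edist_le (f : G →g G') (u v : V) : G'.edist (f u) (f v) ≤ G.edist u v := by
  by_cases h : G.Reachable u v
  · obtain ⟨p, hp⟩ := h.exists_walk_length_eq_edist
    simpa [hp] using SimpleGraph.edist_le (p.map f)
  · simp [edist_eq_top_of_not_reachable h]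

theorem Iso.dist_eq (f : G ≃g G') (u v : V) : G'.dist (f u) (f v) = G.dist u v := by
  have h := f.symm.toHom.edist_le (f u) (f v)
  simp only [RelIso.coe_toRelEmbedding, RelEmbedding.coe_toRelHom, RelIso.symm_apply_apply] at h
  exact congrArg ENat.toNat (le_antisymm (f.toHom.edist_le u v) h)

theorem Iso.bijOn_setOf_dist_le (f : G ≃g G') (u : V) (n : ℕ) :
    Set.BijOn f {v | G.dist u v ≤ n} {w | G'.dist (f u) w ≤ n} :=
  f.toEquiv.bijOn fun v => by simp [← f.dist_eq u v]

theorem Walk.dist_le_length_of_mem_support {u v w : V} (p : G.Walk u v) (hw : w ∈ p.support) :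
    G.dist u w ≤ p.length := by
  classical
  exact (dist_le (p.takeUntil w hw)).trans (p.length_takeUntil_le_length hw)

theorem Connected.exists_adj_dist_eq (hc : G.Connected) {x u : V} {d : ℕ}
    (h : G.dist x u = d + 1) : ∃ w, G.Adj w u ∧ G.dist x w = d := by
  obtain ⟨p, hp⟩ := (hc u x).exists_walk_length_eq_dist
  cases p with
  | nil => simp at h
  | @cons _ w _ hadj q =>
    refine ⟨w, hadj.symm, ?_⟩
    have hwu : G.dist w u = 1 := dist_eq_one_iff_adj.2 hadj.symm
    have htri : G.dist x u ≤ G.dist x w + G.dist w u := hc.dist_triangle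
    have hq : G.dist x w ≤ q.length := dist_comm.trans_le (dist_le q)
    rw [Walk.length_cons, dist_comm] at hp
    omega

variable {Δ : ℕ}

theorem Connected.encard_setOf_dist_le_le (hc : G.Connected)
    (hdeg : ∀ v, (G.neighborSet v).encard ≤ Δ) (x : V) (n : ℕ) :
    {v | G.dist x v ≤ n}.encard ≤ ((Δ + 1) ^ n : ℕ) := by
  induction n with
  | zero => simp [hc.dist_eq_zero_iff]
  | succ n ih =>
    have hfin : {v | G.dist x v ≤ n}.Finite := Set.finite_of_encard_le_coe ih
    have hcover : {v | G.dist x v ≤ n + 1} ⊆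
        ⋃ v ∈ hfin.toFinset, insert v (G.neighborSet v) := by
      intro u (hu : G.dist x u ≤ n + 1)
      simp only [Set.mem_iUnion, Set.Finite.mem_toFinset, exists_prop]
      rcases Nat.lt_or_eq_of_le hu with hu | hu
      · exact ⟨u, Nat.lt_succ_iff.1 hu, Set.mem_insert u _⟩
      · obtain ⟨w, hwu, hw⟩ := hc.exists_adj_dist_eq hu
        exact ⟨w, hw.le, Set.mem_insert_of_mem _ hwu⟩
    calc {v | G.dist x v ≤ n + 1}.encard
        ≤ ∑ v ∈ hfin.toFinset, (insert v (G.neighborSet v)).encard :=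
          (Set.encard_le_encard hcover).trans (Finset.set_encard_biUnion_le _ _)
      _ ≤ ∑ v ∈ hfin.toFinset, ((Δ + 1 : ℕ) : ℕ∞) := by
          gcongr with v
          exact (Set.encard_insert_le _ _).trans (by push_cast; gcongr; exact hdeg v)
      _ = hfin.toFinset.card * (Δ + 1 : ℕ) := by simp [mul_add]
      _ ≤ ((Δ + 1) ^ n : ℕ) * (Δ + 1 : ℕ) := by
          rw [← Set.encard_coe_eq_coe_finsetCard, Set.Finite.coe_toFinset]
          gcongr
      _ = ((Δ + 1) ^ (n + 1) : ℕ) := by push_cast; ring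

section BreadthFirst

variable {x : V} {e : ℕ ≃ V}

theorem apply_zero_eq_of_monotone_dist (hc : G.Connected) (he : Monotone (G.dist x ∘ e)) :
    e 0 = x := by
  have h := he (Nat.zero_le (e.symm x))
  simp only [Function.comp_apply, Equiv.apply_symm_apply, dist_self, nonpos_iff_eq_zero] at h
  exact (hc.dist_eq_zero_iff.1 h).symm

theorem dist_apply_succ_le_of_monotone_dist (hc : G.Connected) (he : Monotone (G.dist x ∘ e))
    (i : ℕ) : G.dist x (e (i + 1)) ≤ G.dist x (e i) + 1 := by
  by_cases hzero : G.dist x (e (i + 1)) = 0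
  · omega
  obtain ⟨d, hd⟩ := Nat.exists_eq_add_one_of_ne_zero hzero
  obtain ⟨w, -, hw⟩ := hc.exists_adj_dist_eq hd
  -- `w` is closer to `x` than `e (i + 1)`, so it comes earlier in the enumeration.
  have hwi : e.symm w ≤ i := by
    by_contra! hlt
    have := he (show i + 1 ≤ e.symm w by omega)
    simp only [Function.comp_apply, Equiv.apply_symm_apply] at this
    omega
  have := he hwi
  simp only [Function.comp_apply, Equiv.apply_symm_apply] at this
  omega

theorem dist_apply_le_of_monotone_dist (hc : G.Connected) (he : Monotone (G.dist x ∘ e))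
    (i : ℕ) : G.dist x (e i) ≤ i := by
  induction i with
  | zero => simp [apply_zero_eq_of_monotone_dist hc he]
  | succ i ih => exact (dist_apply_succ_le_of_monotone_dist hc he i).trans (by omega)

theorem lt_of_dist_apply_le_of_monotone_dist (hc : G.Connected)
    (hdeg : ∀ v, (G.neighborSet v).encard ≤ Δ) (he : Monotone (G.dist x ∘ e)) {i n : ℕ}
    (hi : G.dist x (e i) ≤ n) : i < (Δ + 1) ^ n := by
  have hsub : e '' ↑(Finset.Iic i) ⊆ {v | G.dist x v ≤ n} := by
    rintro - ⟨m, hm, rfl⟩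
    exact (he (Finset.mem_Iic.1 hm)).trans hi
  have := (Set.encard_le_encard hsub).trans (hc.encard_setOf_dist_le_le hdeg x n)
  rw [e.injective.encard_image, Set.encard_coe_eq_coe_finsetCard, Nat.card_Iic,
    Nat.cast_le] at this
  omega

end BreadthFirst

structure IsBFSNumbered (Δ : ℕ) (B : SimpleGraph ℕ) : Prop where
  connected : B.Connected
  encard_neighborSet_le : ∀ i, (B.neighborSet i).encard ≤ Δ
  dist_le_self : ∀ i, B.dist 0 i ≤ i
  lt_of_dist_le : ∀ {n i}, B.dist 0 i ≤ n → i < (Δ + 1) ^ n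

theorem exists_iso_isBFSNumbered [Infinite V] (hc : G.Connected)
    (hdeg : ∀ v, (G.neighborSet v).encard ≤ Δ) (x : V) :
    ∃ (B : SimpleGraph ℕ) (f : G ≃g B), f x = 0 ∧ IsBFSNumbered Δ B := by
  obtain ⟨e, he⟩ := exists_equiv_nat_monotone (G.dist x) fun n =>
    Set.finite_of_encard_le_coe (hc.encard_setOf_dist_le_le hdeg x n)
  have he0 : e 0 = x := apply_zero_eq_of_monotone_dist hc he
  let f : G ≃g G.comap e.toEmbedding := (Iso.comap e G).symm
  have hfx : f x = 0 := e.symm_apply_eq.2 he0.symm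
  have hdist : ∀ i, (G.comap e.toEmbedding).dist 0 i = G.dist x (e i) := fun i => by
    rw [← hfx, ← f.symm.dist_eq]; simp [f]
  refine ⟨_, f, hfx, (Iso.connected_iff f).1 hc, fun i => ?_, fun i => ?_, fun {n i} h => ?_⟩
  · have hi : f (e i) = i := by simp [f]
    rw [← hi, ← f.image_neighborSet, f.injective.encard_image]
    exact hdeg _
  · exact hdist i ▸ dist_apply_le_of_monotone_dist hc he i
  · exact lt_of_dist_apply_le_of_monotone_dist hc hdeg he (hdist i ▸ h)

def AgreeOn (B B' : SimpleGraph V) (S : Set V) : Prop :=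
  ∀ u ∈ S, ∀ v ∈ S, (B.Adj u v ↔ B'.Adj u v)

namespace AgreeOn

variable {B B' : SimpleGraph V} {S : Set V}

theorem symm (h : AgreeOn B B' S) : AgreeOn B' B S :=
  fun u hu v hv => (h u hu v hv).symm

theorem exists_walk_length_eq (h : AgreeOn B B' S) {u v : V} (p : B.Walk u v)
    (hp : ∀ w ∈ p.support, w ∈ S) : ∃ q : B'.Walk u v, q.length = p.length := by
  refine ⟨p.transfer B' fun e he => ?_, p.length_transfer _⟩
  induction e using Sym2.ind with
  | _ a b =>
    exact (h a (hp a (p.fst_mem_support_of_mem_edges he)) b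
      (hp b (p.snd_mem_support_of_mem_edges he))).1 (p.edges_subset_edgeSet he)

theorem exists_walk_length_le (h : AgreeOn B B' S) (hB : B.Connected) {r v : V} {n : ℕ}
    (hS : ∀ w, B.dist r w ≤ n → w ∈ S) (hv : B.dist r v ≤ n) :
    ∃ q : B'.Walk r v, q.length ≤ n := by
  obtain ⟨p, hp⟩ := (hB r v).exists_walk_length_eq_dist
  obtain ⟨q, hq⟩ := h.exists_walk_length_eq p fun w hw =>
    hS w ((p.dist_le_length_of_mem_support hw).trans (hp ▸ hv))
  exact ⟨q, hq ▸ hp ▸ hv⟩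

theorem setOf_dist_le_eq (h : AgreeOn B B' S) (hB : B.Connected) (hB' : B'.Connected) {r : V}
    {n : ℕ} (hS : ∀ w, B.dist r w ≤ n → w ∈ S) (hS' : ∀ w, B'.dist r w ≤ n → w ∈ S) :
    {v | B.dist r v ≤ n} = {v | B'.dist r v ≤ n} := by
  ext v
  constructor
  · intro hv
    obtain ⟨q, hq⟩ := h.exists_walk_length_le hB hS hv
    exact (dist_le q).trans hq
  · intro hv
    obtain ⟨q, hq⟩ := h.symm.exists_walk_length_le hB' hS' hv
    exact (dist_le q).trans hq

def induceIso (h : AgreeOn B B' S) {s t : Set V} (hst : s = t) (hs : s ⊆ S) :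
    B.induce s ≃g B'.induce t where
  toEquiv := Equiv.setCongr hst
  map_rel_iff' {u v} := (h u (hs u.2) v (hs v.2)).symm

end AgreeOn

theorem eventually_agreeOn {ι : Type*} {l : Filter ι} {B : ι → SimpleGraph V}
    {L : SimpleGraph V} (h : ∀ u v, ∀ᶠ k in l, ((B k).Adj u v ↔ L.Adj u v)) {S : Set V}
    (hS : S.Finite) : ∀ᶠ k in l, AgreeOn (B k) L S := by
  simp only [AgreeOn, Filter.eventually_all_finite hS]
  exact fun u _ v _ => h u v

namespace IsBFSNumbered

variable {ι : Type*} {B : ι → SimpleGraph ℕ} {L : SimpleGraph ℕ}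

theorem exists_walk_of_forall_exists_agreeOn (hB : ∀ k, IsBFSNumbered Δ (B k))
    (hL : ∀ M, ∃ k, AgreeOn (B k) L (Set.Iio M)) (i : ℕ) :
    ∃ p : L.Walk 0 i, p.length ≤ i := by
  obtain ⟨k, hk⟩ := hL ((Δ + 1) ^ i)
  exact hk.exists_walk_length_le (hB k).connected (fun _ => (hB k).lt_of_dist_le)
    ((hB k).dist_le_self i)

theorem of_forall_exists_agreeOn (hB : ∀ k, IsBFSNumbered Δ (B k))
    (hL : ∀ M, ∃ k, AgreeOn (B k) L (Set.Iio M)) : IsBFSNumbered Δ L := by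
  have hwalk := exists_walk_of_forall_exists_agreeOn hB hL
  have hconn : L.Connected := (connected_iff_exists_forall_reachable L).2
    ⟨0, fun i => (hwalk i).elim fun p _ => ⟨p⟩⟩
  have hlt : ∀ {n i}, L.dist 0 i ≤ n → i < (Δ + 1) ^ n := fun {n i} hi => by
    obtain ⟨p, hp⟩ := (hconn 0 i).exists_walk_length_eq_dist
    obtain ⟨M, hM⟩ := p.support.toFinset.exists_nat_subset_range
    obtain ⟨k, hk⟩ := hL M
    obtain ⟨q, hq⟩ := hk.symm.exists_walk_length_eq p fun w hw =>
      Finset.mem_range.1 (hM (List.mem_toFinset.2 hw))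
    exact (hB k).lt_of_dist_le ((dist_le q).trans (hq ▸ hp ▸ hi))
  refine ⟨hconn, fun i => ?_, fun i => (hwalk i).elim fun p hp => (dist_le p).trans hp, hlt⟩
  -- Neighbours of `i` lie in a window determined by `L.dist 0 i`, on which `L` agrees with some
  -- `B k`.
  obtain ⟨k, hk⟩ := hL ((Δ + 1) ^ (L.dist 0 i + 1) + i + 1)
  have hnbr : L.neighborSet i ⊆ (B k).neighborSet i := fun u hu => by
    have hiu : L.dist 0 u ≤ L.dist 0 i + 1 :=
      hconn.dist_triangle.trans (by rw [dist_eq_one_iff_adj.2 hu])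
    have := hlt hiu
    exact (hk i (by rw [Set.mem_Iio]; omega) u (by rw [Set.mem_Iio]; omega)).2 hu
  exact (Set.encard_le_encard hnbr).trans ((hB k).encard_neighborSet_le i)

theorem setOf_dist_le_eq {B L : SimpleGraph ℕ} (hB : IsBFSNumbered Δ B) (hL : IsBFSNumbered Δ L)
    {n : ℕ} (h : AgreeOn B L (Set.Iio ((Δ + 1) ^ n))) :
    {i | B.dist 0 i ≤ n} = {i | L.dist 0 i ≤ n} :=
  h.setOf_dist_le_eq hB.connected hL.connected (fun _ => hB.lt_of_dist_le)
    (fun _ => hL.lt_of_dist_le)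

end IsBFSNumbered

theorem exists_subseq_tendsto {Ξ : Type*} [TopologicalSpace Ξ] [CompactSpace Ξ]
    [FirstCountableTopology Ξ] [Countable V] (B : ℕ → SimpleGraph V) (c : ℕ → V → Ξ) :
    ∃ j : ℕ → ℕ, StrictMono j ∧ ∃ (L : SimpleGraph V) (c' : V → Ξ),
      (∀ u v, ∀ᶠ k in atTop, ((B (j k)).Adj u v ↔ L.Adj u v)) ∧
      Tendsto (fun k => c (j k)) atTop (𝓝 c') := by
  classical
  obtain ⟨⟨a, c'⟩, j, hj, hlim⟩ :=
    CompactSpace.tendsto_subseq fun k => (fun u v => decide ((B k).Adj u v), c k)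
  have ha : ∀ u v, ∀ᶠ k in atTop, decide ((B (j k)).Adj u v) = a u v := fun u v =>
    tendsto_pure.1 (nhds_discrete Bool ▸
      tendsto_pi_nhds.1 (tendsto_pi_nhds.1 ((continuous_fst.tendsto _).comp hlim) u) v)
  refine ⟨j, hj, SimpleGraph.fromRel fun u v => a u v, c', fun u v => ?_,
    (continuous_snd.tendsto _).comp hlim⟩
  filter_upwards [ha u v, ha v u] with k huv hvu
  rw [fromRel_adj, ← huv, ← hvu]
  simp only [decide_eq_true_eq]
  exact ⟨fun h => ⟨h.ne, Or.inl h⟩, fun ⟨hne, h⟩ => h.elim id fun h => h.symm⟩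

end SimpleGraph

/-- Let Δ ∈ ℕ, let Ξ be a compact metric space, and let (X_k, x_k, φ_k)
be a sequence of pointed, infinite, connected simple graphs of maximum degree at most
Δ equipped with colorings φ_k : X_k → Ξ. Then there exist a subsequence j and a
pointed, infinite, connected, colored simple graph (X,x,φ) on a countable vertex type
of maximum degree at most Δ, such that for every n ∈ ℕ and every ε > 0, for all large
enough k, there is a pointed isomorphism h from the disk D(x_{j(k)}, n) in X_{j(k)}
onto the disk D(x,n) in X moving all colors by less than ε. -/
theorem stmt_17 (Δ : ℕ) {Ξ : Type} [MetricSpace Ξ] [CompactSpace Ξ]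
    (V : ℕ → Type) (G : ∀ k : ℕ, SimpleGraph (V k))
    (hinf : ∀ k, Infinite (V k)) (hconn : ∀ k, (G k).Connected)
    (hdeg : ∀ k, ∀ v : V k, ((G k).neighborSet v).encard ≤ Δ)
    (x : ∀ k : ℕ, V k) (φ : ∀ k : ℕ, V k → Ξ) :
    ∃ j : ℕ → ℕ, StrictMono j ∧
    ∃ (W : Type) (GW : SimpleGraph W) (xW : W) (φW : W → Ξ),
      Countable W ∧ Infinite W ∧ GW.Connected ∧
      (∀ w : W, (GW.neighborSet w).encard ≤ Δ) ∧
      ∀ (n : ℕ) (ε : ℝ), 0 < ε → ∃ N : ℕ, ∀ k : ℕ, N ≤ k →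
        ∃ h : ((G (j k)).induce {v : V (j k) | (G (j k)).dist (x (j k)) v ≤ n}) ≃g
              (GW.induce {w : W | GW.dist xW w ≤ n}),
          (h ⟨x (j k), by simp [SimpleGraph.dist_self]⟩ : W) = xW ∧
          ∀ u : {v : V (j k) | (G (j k)).dist (x (j k)) v ≤ n},
            dist (φ (j k) u) (φW (h u)) < ε := by
  choose B f hfx hB using fun k =>
    haveI := hinf k; SimpleGraph.exists_iso_isBFSNumbered (hconn k) (hdeg k) (x k)
  obtain ⟨j, hj, L, c, hadj, hc⟩ :=
    SimpleGraph.exists_subseq_tendsto B fun k => φ k ∘ (f k).symm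
  have hagree : ∀ M, ∀ᶠ k in atTop, (B (j k)).AgreeOn L (Set.Iio M) :=
    fun M => SimpleGraph.eventually_agreeOn hadj (Set.finite_Iio M)
  have hL : SimpleGraph.IsBFSNumbered Δ L :=
    .of_forall_exists_agreeOn (fun k => hB (j k)) fun M => (hagree M).exists
  refine ⟨j, hj, ℕ, L, 0, c, inferInstance, inferInstance, hL.connected,
    hL.encard_neighborSet_le, fun n ε hε => ?_⟩
  have hclose : ∀ᶠ k in atTop, ∀ i ∈ Set.Iio ((Δ + 1) ^ n),
      dist (φ (j k) ((f (j k)).symm i)) (c i) < ε :=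
    (eventually_all_finite (Set.finite_Iio _)).2 fun i _ =>
      Metric.tendsto_nhds.1 (tendsto_pi_nhds.1 hc i) ε hε
  obtain ⟨N, hN⟩ := eventually_atTop.1 ((hagree ((Δ + 1) ^ n)).and hclose)
  refine ⟨N, fun k hk => ?_⟩
  obtain ⟨hagk, hclk⟩ := hN k hk
  have hbij := (f (j k)).bijOn_setOf_dist_le (x (j k)) n
  rw [hfx] at hbij
  refine ⟨((f (j k)).induce hbij).trans (hagk.induceIso ((hB _).setOf_dist_le_eq hL hagk)
    fun _ => (hB _).lt_of_dist_le), hfx _, fun u => ?_⟩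
  have := hclk (f (j k) u) ((hB _).lt_of_dist_le (hbij.mapsTo u.2))
  rwa [RelIso.symm_apply_apply] at this
end
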